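/- arXiv:2203.05816 — 4 statements merged into one kernel-verified Lean document; each statement's English description precedes it below -/
import Mathlib

section
/- Pointwise bound on the change of the posterior mixture density: for every d ∈ 𝒟, |f^A(d) − f^O(d)| ≤ (inf_{w ∈ 𝒲} f(d|w)) · (e^{2ξ} − 1) · TV(P^O ‖ P^S), where f^A(d) = ∫ f(d|w) dP^S(w) and f^O(d) = ∫ f(d|w) dP^O(w). -/
open MeasureTheory

/-- Total variation distance between two measures:
`TV(P ‖ Q) = sup_{A measurable} |P(A) − Q(A)|`. -/
noncomputable def TV {α : Type*} [MeasurableSpace α] (P Q : Measure α) : ℝ :=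
  ⨆ A : { A : Set α // MeasurableSet A }, |(P A).toReal - (Q A).toReal|

/-- Pointwise bound on the change of the posterior mixture density: for every `d ∈ 𝒟`,
`|f^A(d) − f^O(d)| ≤ (inf_w f(d|w)) · (e^{2ξ} − 1) · TV(P^O ‖ P^S)`,
where `f^A(d) = ∫ f(d|w) dP^S(w)` and `f^O(d) = ∫ f(d|w) dP^O(w)`. -/
theorem abs_mixture_diff_le_inf_mul_tv
    {D W : Type*} [MeasurableSpace D] [MeasurableSpace W] [Nonempty W]
    (μ : Measure D) [SigmaFinite μ]
    (f : D → W → ℝ)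
    (hf_meas : Measurable fun p : D × W => f p.1 p.2)
    (hf_nonneg : ∀ d w, 0 ≤ f d w)
    (hf_dens : ∀ w, ∫ d, f d w ∂μ = 1)
    (PO PS : Measure W) [IsProbabilityMeasure PO] [IsProbabilityMeasure PS]
    (ξ : ℝ) (hξ : 0 ≤ ξ)
    (hratio : ∀ d (w w' : W), f d w ≤ Real.exp (2 * ξ) * f d w') :
    ∀ d, |(∫ w, f d w ∂PS) - ∫ w, f d w ∂PO|
      ≤ (⨅ w, f d w) * (Real.exp (2 * ξ) - 1) * TV PO PS := by
  intro d
  set g : W → ℝ := fun w => f d w with hg_def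
  have hg : Measurable g := hf_meas.comp measurable_prodMk_left
  set m : ℝ := ⨅ w, f d w with hm_def
  have hbdd : BddBelow (Set.range g) := ⟨0, by rintro _ ⟨w, rfl⟩; exact hf_nonneg d w⟩
  have hm0 : 0 ≤ m := le_ciInf fun w => hf_nonneg d w
  have hgm : ∀ w, m ≤ g w := fun w => ciInf_le hbdd w
  have hE1 : (1:ℝ) ≤ Real.exp (2 * ξ) := Real.one_le_exp (by linarith)
  have hub : ∀ w, g w ≤ Real.exp (2 * ξ) * m := by
    intro w
    have h1 : g w / Real.exp (2*ξ) ≤ m := by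
      refine le_ciInf fun w' => ?_
      rw [div_le_iff₀ (Real.exp_pos _)]
      calc g w ≤ Real.exp (2*ξ) * g w' := hratio d w w'
        _ = g w' * Real.exp (2*ξ) := mul_comm _ _
    have := (div_le_iff₀ (Real.exp_pos (2*ξ))).mp h1
    linarith [this]
  set C : ℝ := m * (Real.exp (2*ξ) - 1) with hC_def
  have hC0 : 0 ≤ C := mul_nonneg hm0 (by linarith)
  -- h = g - m, nonneg, bounded by C
  have hh_nonneg : ∀ w, 0 ≤ g w - m := fun w => by linarith [hgm w]
  have hh_le : ∀ w, g w - m ≤ C := fun w => by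
    have := hub w; simp only [hC_def]; nlinarith
  -- integrability
  have hint : ∀ (P : Measure W), IsProbabilityMeasure P → Integrable g P := by
    intro P hP
    refine ⟨hg.aestronglyMeasurable, ?_⟩
    exact HasFiniteIntegral.of_bounded (C := Real.exp (2*ξ) * m)
      (ae_of_all _ fun w => by
        rw [Real.norm_eq_abs, abs_of_nonneg (hf_nonneg d w)]; exact hub w)
  have hintS : Integrable g PS := hint PS inferInstance
  have hintO : Integrable g PO := hint PO inferInstance
  have hintS' : Integrable (fun w => g w - m) PS := hintS.sub (integrable_const m)
  have hintO' : Integrable (fun w => g w - m) PO := hintO.sub (integrable_const m)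
  -- reduce to h = g - m
  have hsub : ∀ (P : Measure W), IsProbabilityMeasure P → Integrable g P →
      ∫ w, (g w - m) ∂P = (∫ w, g w ∂P) - m := by
    intro P hP hI
    rw [integral_sub hI (integrable_const m), integral_const]
    simp [measure_univ]
  have key : (∫ w, f d w ∂PS) - ∫ w, f d w ∂PO
      = (∫ w, (g w - m) ∂PS) - ∫ w, (g w - m) ∂PO := by
    rw [hsub PS inferInstance hintS, hsub PO inferInstance hintO]; ring
  -- layer cake
  set FS : ℝ → ℝ := fun t => (PS {w | t < g w - m}).toReal with hFS_def
  set FO : ℝ → ℝ := fun t => (PO {w | t < g w - m}).toReal with hFO_def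
  have hLS : ∫ w, (g w - m) ∂PS = ∫ t in Set.Ioi 0, FS t :=
    hintS'.integral_eq_integral_meas_lt (ae_of_all _ hh_nonneg)
  have hLO : ∫ w, (g w - m) ∂PO = ∫ t in Set.Ioi 0, FO t :=
    hintO'.integral_eq_integral_meas_lt (ae_of_all _ hh_nonneg)
  have hAmeas : ∀ t : ℝ, MeasurableSet {w | t < g w - m} :=
    fun t => measurableSet_lt measurable_const (hg.sub measurable_const)
  have hempty : ∀ t : ℝ, C < t → {w | t < g w - m} = ∅ := by
    intro t ht
    ext w; simp only [Set.mem_setOf_eq, Set.mem_empty_iff_false, iff_false, not_lt]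
    linarith [hh_le w]
  -- monotonicity & measurability of FS, FO
  have hanti : ∀ (P : Measure W), IsProbabilityMeasure P →
      Antitone (fun t => (P {w | t < g w - m}).toReal) := by
    intro P hP s t hst
    exact ENNReal.toReal_mono (measure_ne_top _ _)
      (measure_mono fun w hw => lt_of_le_of_lt hst hw)
  have hFSmeas : Measurable FS := (hanti PS inferInstance).measurable
  have hFOmeas : Measurable FO := (hanti PO inferInstance).measurable
  haveI hfin : IsFiniteMeasure (volume.restrict (Set.Ioc (0:ℝ) C)) :=
    ⟨by rw [Measure.restrict_apply_univ]; exact measure_Ioc_lt_top⟩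
  have hFle1 : ∀ (P : Measure W) [IsProbabilityMeasure P] (t : ℝ),
      (P {w | t < g w - m}).toReal ≤ 1 := by
    intro P hP t
    have : (P {w | t < g w - m}).toReal ≤ (P Set.univ).toReal :=
      ENNReal.toReal_mono (measure_ne_top _ _) (measure_mono (Set.subset_univ _))
    simpa [measure_univ] using this
  have hFnn : ∀ (P : Measure W) (t : ℝ), 0 ≤ (P {w | t < g w - m}).toReal :=
    fun P t => ENNReal.toReal_nonneg
  have hintF : ∀ (P : Measure W), IsProbabilityMeasure P → Measurable (fun t => (P {w | t < g w - m}).toReal) →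
      IntegrableOn (fun t => (P {w | t < g w - m}).toReal) (Set.Ioc 0 C) := by
    intro P hP hmeas
    refine ⟨hmeas.aestronglyMeasurable, ?_⟩
    exact HasFiniteIntegral.of_bounded (C := (1:ℝ))
      (ae_of_all _ fun t => by
        rw [Real.norm_eq_abs, abs_of_nonneg (hFnn P t)]; exact hFle1 P t)
  have hintFS : IntegrableOn FS (Set.Ioc 0 C) := hintF PS inferInstance hFSmeas
  have hintFO : IntegrableOn FO (Set.Ioc 0 C) := hintF PO inferInstance hFOmeas
  -- restrict integrals to Ioc 0 C
  have hzero : ∀ (P : Measure W), (∫ t in Set.Ioi C, (P {w | t < g w - m}).toReal) = 0 := by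
    intro P
    rw [setIntegral_congr_fun measurableSet_Ioi
      (fun t (ht : t ∈ Set.Ioi C) => by
        show (P {w | t < g w - m}).toReal = (0:ℝ)
        rw [hempty t ht]; simp)]
    simp
  have hrestr : ∀ (P : Measure W), IsProbabilityMeasure P →
      IntegrableOn (fun t => (P {w | t < g w - m}).toReal) (Set.Ioc 0 C) →
      (∫ t in Set.Ioi (0:ℝ), (P {w | t < g w - m}).toReal)
        = ∫ t in Set.Ioc 0 C, (P {w | t < g w - m}).toReal := by
    intro P hP hI
    have hunion : Set.Ioc (0:ℝ) C ∪ Set.Ioi C = Set.Ioi 0 := Set.Ioc_union_Ioi_eq_Ioi hC0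
    have hIoi : IntegrableOn (fun t => (P {w | t < g w - m}).toReal) (Set.Ioi C) := by
      refine (integrableOn_congr_fun (fun t (ht : t ∈ Set.Ioi C) => ?_) measurableSet_Ioi).mpr
        (integrableOn_zero)
      show (P {w | t < g w - m}).toReal = (0:ℝ)
      rw [hempty t ht]; simp
    rw [← hunion, setIntegral_union Set.Ioc_disjoint_Ioi_same measurableSet_Ioi hI hIoi,
      hzero P, add_zero]
  have hS : ∫ w, (g w - m) ∂PS = ∫ t in Set.Ioc 0 C, FS t := by
    rw [hLS]; exact hrestr PS inferInstance hintFS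
  have hO : ∫ w, (g w - m) ∂PO = ∫ t in Set.Ioc 0 C, FO t := by
    rw [hLO]; exact hrestr PO inferInstance hintFO
  -- TV bound for each set
  have hbddTV : BddAbove (Set.range fun A : {A : Set W // MeasurableSet A} =>
      |(PO ↑A).toReal - (PS ↑A).toReal|) := by
    refine ⟨2, ?_⟩
    rintro _ ⟨A, rfl⟩
    have h1 : (PO ↑A).toReal ≤ 1 := by
      have : (PO ↑A).toReal ≤ (PO Set.univ).toReal :=
        ENNReal.toReal_mono (measure_ne_top _ _) (measure_mono (Set.subset_univ _))
      simpa [measure_univ] using this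
    have h2 : (PS ↑A).toReal ≤ 1 := by
      have : (PS ↑A).toReal ≤ (PS Set.univ).toReal :=
        ENNReal.toReal_mono (measure_ne_top _ _) (measure_mono (Set.subset_univ _))
      simpa [measure_univ] using this
    have h3 : 0 ≤ (PO ↑A).toReal := ENNReal.toReal_nonneg
    have h4 : 0 ≤ (PS ↑A).toReal := ENNReal.toReal_nonneg
    rw [abs_sub_le_iff]; constructor <;> linarith
  have hTV_ge : ∀ (A : Set W), MeasurableSet A →
      |(PO A).toReal - (PS A).toReal| ≤ TV PO PS := by
    intro A hA
    exact le_ciSup hbddTV (⟨A, hA⟩ : {A : Set W // MeasurableSet A})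
  -- final bound
  have hdiff : |∫ t in Set.Ioc 0 C, (FS t - FO t)| ≤ TV PO PS * C := by
    have := norm_setIntegral_le_of_norm_le_const (μ := volume) (s := Set.Ioc 0 C)
      (f := fun t => FS t - FO t) (C := TV PO PS) measure_Ioc_lt_top
      (fun t _ => by
        rw [Real.norm_eq_abs, abs_sub_comm]
        exact hTV_ge _ (hAmeas t))
    rw [Real.norm_eq_abs] at this
    calc |∫ t in Set.Ioc 0 C, (FS t - FO t)| ≤ TV PO PS * (volume (Set.Ioc (0:ℝ) C)).toReal := this
      _ = TV PO PS * C := by rw [Real.volume_Ioc]; rw [ENNReal.toReal_ofReal (by linarith)]; ring_nf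
  calc |(∫ w, f d w ∂PS) - ∫ w, f d w ∂PO|
      = |∫ t in Set.Ioc 0 C, (FS t - FO t)| := by
        rw [key, hS, hO, integral_sub hintFS hintFO]
    _ ≤ TV PO PS * C := hdiff
    _ = m * (Real.exp (2*ξ) - 1) * TV PO PS := by rw [hC_def]; ring
end

section
/- Under the stated assumptions on the aggregated model distributions, the utility loss is bounded below by the total variation distance: ε_u := ∫ U_a dP^O_a − ∫ U_a dP^S_a ≥ (Δ/2)·TV(P^O_a ‖ P^S_a). -/
open MeasureTheory

/-- Under the convergence assumption and Assumption 4.1, the utility loss is bounded below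
by the total variation distance:
`ε_u := ∫ U_a dP^O_a − ∫ U_a dP^S_a ≥ (Δ/2)·TV(P^O_a ‖ P^S_a)`. -/
theorem utility_loss_ge_tv
    {Wa : Type*} [MeasurableSpace Wa]
    (K : ℕ) (hK : 0 < K)
    (POa PSa : Measure Wa) [IsProbabilityMeasure POa] [IsProbabilityMeasure PSa]
    (U : Fin K → Wa → ℝ)
    (hU_meas : ∀ k, Measurable (U k))
    (hU_nonneg : ∀ k w, 0 ≤ U k w)
    (Ua : Wa → ℝ)
    (hUa : Ua = fun w => (1 / (K : ℝ)) * ∑ k, U k w)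
    -- `suppO` and `suppS` are the supports of `P^O_a` and `P^S_a`: measurable sets of
    -- full measure for the respective distributions.
    (suppO suppS : Set Wa)
    (hsuppO_meas : MeasurableSet suppO) (hsuppS_meas : MeasurableSet suppS)
    (hsuppO_full : POa suppOᶜ = 0) (hsuppS_full : PSa suppSᶜ = 0)
    -- `Wstar` is the set of maximizers of `U_a` over the union of the supports.
    (Wstar : Set Wa)
    (hWstar : Wstar = {w ∈ suppO ∪ suppS | ∀ v ∈ suppO ∪ suppS, Ua v ≤ Ua w})
    (hWstar_ne : Wstar.Nonempty)
    -- convergence assumption: the support of `P^O_a` consists of maximizers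
    (hconv : suppO ⊆ Wstar)
    -- Assumption 4.1
    (Δ : ℝ) (hΔ : 0 < Δ)
    (hassump : (PSa {w ∈ suppS | ∀ ws ∈ Wstar, Ua ws - Ua w ≤ Δ}).toReal
        ≤ TV POa PSa / 2) :
    (∫ w, Ua w ∂POa) - (∫ w, Ua w ∂PSa) ≥ (Δ / 2) * TV POa PSa := by

  classical
  obtain ⟨ws, hws⟩ := hWstar_ne
  set M := Ua ws with hM
  have hUa_nonneg : ∀ w, 0 ≤ Ua w := by
    intro w; rw [hUa]
    exact mul_nonneg (by positivity) (Finset.sum_nonneg fun k _ => hU_nonneg k w)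
  have hUa_meas : Measurable Ua := by
    rw [hUa]
    exact measurable_const.mul (Finset.measurable_sum _ fun k _ => hU_meas k)
  have hws_mem : ws ∈ suppO ∪ suppS := by rw [hWstar] at hws; exact hws.1
  have hws_max : ∀ v ∈ suppO ∪ suppS, Ua v ≤ M := by
    rw [hWstar] at hws; exact hws.2
  have hWstar_val : ∀ w ∈ Wstar, Ua w = M := by
    intro w hw; rw [hWstar] at hw
    exact le_antisymm (hws_max w hw.1) (hw.2 ws hws_mem)
  -- integral over POa equals M
  have hO_ae : ∀ᵐ w ∂POa, Ua w = M := by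
    refine Filter.eventually_of_mem ?_ (fun w hw => hWstar_val w (hconv hw))
    rw [mem_ae_iff]; exact hsuppO_full
  have hIO : (∫ w, Ua w ∂POa) = M := by
    rw [integral_congr_ae hO_ae]; simp
  -- the set B
  set B : Set Wa := {w ∈ suppS | ∀ ws ∈ Wstar, Ua ws - Ua w ≤ Δ} with hBdef
  have hB_eq : B = suppS ∩ Ua ⁻¹' Set.Ici (M - Δ) := by
    ext w
    constructor
    · rintro ⟨hw1, hw2⟩
      refine ⟨hw1, ?_⟩
      have := hw2 ws hws
      simp only [Set.mem_preimage, Set.mem_Ici]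
      linarith
    · rintro ⟨hw1, hw2⟩
      refine ⟨hw1, fun w' hw' => ?_⟩
      rw [hWstar_val w' hw']
      simp only [Set.mem_preimage, Set.mem_Ici] at hw2
      linarith
  have hB_meas : MeasurableSet B := by
    rw [hB_eq]; exact hsuppS_meas.inter (hUa_meas measurableSet_Ici)
  have hB_sub : B ⊆ suppS := fun w hw => hw.1
  set t : ℝ := (PSa B).toReal with ht
  have hsuppS_one : PSa suppS = 1 := (prob_compl_eq_zero_iff hsuppS_meas).mp hsuppS_full
  have hdiff : PSa (suppS \ B) = 1 - PSa B := by
    rw [measure_diff hB_sub hB_meas.nullMeasurableSet (measure_ne_top _ _), hsuppS_one]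
  have hdiff_toReal : (PSa (suppS \ B)).toReal = 1 - t := by
    rw [hdiff, ENNReal.toReal_sub_of_le prob_le_one (by norm_num)]
    simp [ht]
  -- a.e. bound on suppS
  have hS_mem : ∀ᵐ w ∂PSa, w ∈ suppS := by
    rw [Filter.eventually_iff, mem_ae_iff]
    simpa using hsuppS_full
  have hS_le_M : ∀ᵐ w ∂PSa, Ua w ≤ M :=
    hS_mem.mono fun w hw => hws_max w (Or.inr hw)
  have hInt : Integrable Ua PSa := by
    refine Integrable.mono' (integrable_const M) hUa_meas.aestronglyMeasurable ?_
    refine hS_le_M.mono fun w hw => ?_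
    rw [Real.norm_eq_abs, abs_of_nonneg (hUa_nonneg w)]; exact hw
  set g : Wa → ℝ := fun w => M - Δ * Set.indicator (suppS \ B) (fun _ => (1:ℝ)) w with hg
  have hg_int : Integrable g PSa := by
    exact (integrable_const M).sub
      (((integrable_const (1:ℝ)).indicator (hsuppS_meas.diff hB_meas)).const_mul Δ)
  have hbound : ∀ᵐ w ∂PSa, Ua w ≤ g w := by
    refine hS_mem.mono fun w hw => ?_
    by_cases hwB : w ∈ B
    · have hnot : w ∉ suppS \ B := fun h => h.2 hwB
      simp only [hg, Set.indicator_of_notMem hnot, mul_zero, sub_zero]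
      exact hws_max w (Or.inr hw)
    · have hin : w ∈ suppS \ B := ⟨hw, hwB⟩
      have : Ua w < M - Δ := by
        have : w ∉ suppS ∩ Ua ⁻¹' Set.Ici (M - Δ) := by rw [← hB_eq]; exact hwB
        have h2 : w ∉ Ua ⁻¹' Set.Ici (M - Δ) := fun h => this ⟨hw, h⟩
        simp only [Set.mem_preimage, Set.mem_Ici, not_le] at h2
        exact h2
      simp only [hg, Set.indicator_of_mem hin, mul_one]
      linarith
  have hg_integral : (∫ w, g w ∂PSa) = M - Δ * (1 - t) := by
    rw [hg]
    rw [integral_sub (integrable_const M)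
      (((integrable_const (1:ℝ)).indicator (hsuppS_meas.diff hB_meas)).const_mul Δ)]
    rw [integral_const_mul, integral_indicator_const _ (hsuppS_meas.diff hB_meas)]
    simp [measureReal_def, hdiff_toReal]
  have hIS : (∫ w, Ua w ∂PSa) ≤ M - Δ * (1 - t) := by
    rw [← hg_integral]
    exact integral_mono_ae hInt hg_int hbound
  -- TV bounds
  have hTV_le_one : TV POa PSa ≤ 1 := by
    refine ciSup_le fun A => ?_
    have h1 : (POa A.1).toReal ≤ 1 := by
      have := prob_le_one (μ := POa) (s := A.1)
      exact ENNReal.toReal_le_of_le_ofReal zero_le_one (by simpa using this)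
    have h2 : (PSa A.1).toReal ≤ 1 := by
      have := prob_le_one (μ := PSa) (s := A.1)
      exact ENNReal.toReal_le_of_le_ofReal zero_le_one (by simpa using this)
    have h3 : (0:ℝ) ≤ (POa A.1).toReal := ENNReal.toReal_nonneg
    have h4 : (0:ℝ) ≤ (PSa A.1).toReal := ENNReal.toReal_nonneg
    rw [abs_sub_le_iff]; constructor <;> linarith
  have ht_nonneg : (0:ℝ) ≤ t := ENNReal.toReal_nonneg
  have hassump' : t ≤ TV POa PSa / 2 := hassump
  rw [hIO]
  nlinarith [hassump', hTV_le_one, hIS, ht_nonneg, hΔ.le]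
end

section
/- Utility bound for the Gaussian randomization mechanism: if 0 ≤ U_k(w) ≤ C_4 for all k and all w ∈ ℝ^n, then the utility loss satisfies ε_u := (1/K)·Σ_{k=1}^K (∫ U_k dP^O_a − ∫ U_k dP^S_a) ≤ (3/2)·C_4·min{1, σ_ε^2·√(Σ_{i=1}^n 1/σ_i^4)}. -/
open MeasureTheory

/-- Density of the multivariate Gaussian `N(m, S)` on `ι → ℝ`. -/
noncomputable def gaussianPdf {ι : Type*} [Fintype ι] [DecidableEq ι]
    (m : ι → ℝ) (S : Matrix ι ι ℝ) (x : ι → ℝ) : ℝ :=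
  (Real.sqrt ((2 * Real.pi) ^ (Fintype.card ι) * S.det))⁻¹ *
    Real.exp (-(1 / 2) * dotProduct (x - m) (S⁻¹.mulVec (x - m)))

/-- The multivariate Gaussian probability measure `N(m, S)` on `ι → ℝ` with mean `m` and
covariance matrix `S`, defined via its density with respect to Lebesgue measure. -/
noncomputable def gaussianMeasure {ι : Type*} [Fintype ι] [DecidableEq ι]
    (m : ι → ℝ) (S : Matrix ι ι ℝ) : Measure (ι → ℝ) :=
  volume.withDensity fun x => ENNReal.ofReal (gaussianPdf m S x)

/-!
Both aggregated models are diagonal Gaussians, so their densities factor over the coordinates and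
the squared Hellinger affinity `(∫ √(p q))²` is the product of the one-dimensional factors
`2 √(a b) / (a + b)`, where `a = σᵢ² / K ≤ b = (σᵢ² + σ_ε²) / K`. Each factor is at least
`1 - (b - a)² / (8 a²) = 1 - σ_ε⁴ / (8 σᵢ⁴)`, hence `1 - (∫ √(p q))² ≤ σ_ε⁴ / 8 · ∑ 1 / σᵢ⁴`.
Le Cam's inequality `∫ |p - q| ≤ 2 √(1 - (∫ √(p q))²)` turns this into a bound on the `L¹`
distance of the densities, and a utility with values in `[0, C]` changes its mean by at most
`C / 2` times that distance.
-/

open Real ProbabilityTheory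
open scoped NNReal

section Densities

variable {α : Type*} [MeasurableSpace α] {μ : Measure α}

theorem integral_mul_le_sqrt_mul_sqrt {f g : α → ℝ} (hf0 : 0 ≤ f) (hg0 : 0 ≤ g)
    (hfm : AEStronglyMeasurable f μ) (hgm : AEStronglyMeasurable g μ)
    (hf : Integrable (fun x => f x ^ 2) μ) (hg : Integrable (fun x => g x ^ 2) μ) :
    ∫ x, f x * g x ∂μ ≤ √(∫ x, f x ^ 2 ∂μ) * √(∫ x, g x ^ 2 ∂μ) := by
  have hL2 : ∀ {h : α → ℝ}, AEStronglyMeasurable h μ → Integrable (fun x => h x ^ 2) μ →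
      MemLp h (ENNReal.ofReal 2) μ := fun hm hi => by
    simpa using (memLp_two_iff_integrable_sq hm).2 hi
  have := integral_mul_le_Lp_mul_Lq_of_nonneg HolderConjugate.two_two
    (.of_forall hf0) (.of_forall hg0) (hL2 hfm hf) (hL2 hgm hg)
  simp only [rpow_two] at this
  rwa [← sqrt_eq_rpow, ← sqrt_eq_rpow] at this

variable {p q : α → ℝ}

theorem integral_abs_sub_le_two_mul_sqrt_one_sub_sq (hp0 : 0 ≤ p) (hq0 : 0 ≤ q)
    (hp : Integrable p μ) (hq : Integrable q μ) (hp1 : ∫ x, p x ∂μ = 1) (hq1 : ∫ x, q x ∂μ = 1) :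
    ∫ x, |p x - q x| ∂μ ≤ 2 * √(1 - (∫ x, √(p x * q x) ∂μ) ^ 2) := by
  set R := ∫ x, √(p x * q x) ∂μ
  have hpq : Integrable (fun x => √(p x * q x)) μ := by
    refine (hp.add hq).mono' ((continuous_sqrt.comp_aestronglyMeasurable (hp.1.mul hq.1))) ?_
    refine .of_forall fun x => ?_
    rw [norm_of_nonneg (sqrt_nonneg _), sqrt_mul (hp0 x), Pi.add_apply]
    nlinarith [sq_sqrt (hp0 x), sq_sqrt (hq0 x), sq_nonneg (√(p x) - √(q x))]
  -- `c = -1` and `c = 1` give the two factors of `|p - q| = |√p - √q| * (√p + √q)`.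
  have hsq : ∀ c : ℝ, c ^ 2 = 1 → ∀ x,
      (√(p x) + c * √(q x)) ^ 2 = p x + q x + 2 * c * √(p x * q x) := fun c hc x => by
    rw [sqrt_mul (hp0 x)]
    linear_combination sq_sqrt (hp0 x) + √(q x) ^ 2 * hc + sq_sqrt (hq0 x)
  have hint : ∀ c : ℝ, ∫ x, p x + q x + 2 * c * √(p x * q x) ∂μ = 2 + 2 * c * R := fun c => by
    rw [integral_add (f := fun x => p x + q x) (hp.add hq) (hpq.const_mul _), integral_add hp hq,
      integral_const_mul, hp1, hq1, one_add_one_eq_two]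
  have hcs := integral_mul_le_sqrt_mul_sqrt (μ := μ)
    (f := fun x => |√(p x) + (-1) * √(q x)|) (g := fun x => √(p x) + 1 * √(q x))
    (fun x => abs_nonneg _) (fun x => by positivity)
    (by fun_prop) (by fun_prop)
    (by simp_rw [sq_abs, hsq (-1) (by norm_num)]; exact (hp.add hq).add (hpq.const_mul _))
    (by simp_rw [hsq 1 (by norm_num)]; exact (hp.add hq).add (hpq.const_mul _))
  simp_rw [sq_abs, hsq _ (by norm_num : (-1 : ℝ) ^ 2 = 1), hsq _ (one_pow 2), hint] at hcs
  have hfactor : ∀ x, |p x - q x| = |√(p x) + (-1) * √(q x)| * (√(p x) + 1 * √(q x)) :=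
    fun x => by
      rw [← abs_of_nonneg (by positivity : 0 ≤ √(p x) + 1 * √(q x)), ← abs_mul]
      congr 1
      linear_combination -(sq_sqrt (hp0 x)) + sq_sqrt (hq0 x)
  have hR : 0 ≤ R := integral_nonneg fun x => sqrt_nonneg _
  simp_rw [hfactor]
  calc _ ≤ _ := hcs
    _ = 2 * √(1 - R ^ 2) := by
      rw [← sqrt_mul' _ (by linarith),
        show (2 + 2 * -1 * R) * (2 + 2 * 1 * R) = 2 ^ 2 * (1 - R ^ 2) by ring,
        sqrt_mul (by norm_num), sqrt_sq zero_le_two]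

theorem integral_mul_sub_integral_mul_le {U : α → ℝ} {C : ℝ} (hp : Integrable p μ)
    (hq : Integrable q μ) (hpq : ∫ x, p x ∂μ = ∫ x, q x ∂μ) (hUm : AEStronglyMeasurable U μ)
    (hU0 : ∀ x, 0 ≤ U x) (hUC : ∀ x, U x ≤ C) :
    ∫ x, p x * U x ∂μ - ∫ x, q x * U x ∂μ ≤ C / 2 * ∫ x, |p x - q x| ∂μ := by
  have hUbdd : ∀ᵐ x ∂μ, ‖U x‖ ≤ C := .of_forall fun x => by
    rw [norm_of_nonneg (hU0 x)]; exact hUC x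
  have hpU : Integrable (fun x => p x * U x) μ := hp.mul_bdd hUm hUbdd
  have hqU : Integrable (fun x => q x * U x) μ := hq.mul_bdd hUm hUbdd
  -- `(p - q) U ≤ C (p - q)⁺`, and `∫ (p - q) = 0`.
  have hpointwise : ∀ x, p x * U x - q x * U x ≤ C / 2 * (|p x - q x| + (p x - q x)) := by
    intro x
    have := hU0 x; have := hUC x
    rcases abs_cases (p x - q x) with ⟨h, _⟩ | ⟨h, _⟩ <;> rw [h] <;> nlinarith
  rw [← integral_sub hpU hqU]
  calc _ ≤ ∫ x, C / 2 * (|p x - q x| + (p x - q x)) ∂μ :=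
        integral_mono (hpU.sub hqU) (((hp.sub hq).abs.add (hp.sub hq)).const_mul _) hpointwise
    _ = C / 2 * ∫ x, |p x - q x| ∂μ := by
      rw [integral_const_mul, integral_add (f := fun x => |p x - q x|) (g := fun x => p x - q x)
        (hp.sub hq).abs (hp.sub hq), integral_sub hp hq, hpq, sub_self, add_zero]

end Densities

theorem Finset.one_sub_prod_le_sum_one_sub {ι : Type*} (s : Finset ι) {f : ι → ℝ}
    (h0 : ∀ i ∈ s, 0 ≤ f i) (h1 : ∀ i ∈ s, f i ≤ 1) :
    1 - ∏ i ∈ s, f i ≤ ∑ i ∈ s, (1 - f i) := by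
  induction s using Finset.cons_induction with
  | empty => simp
  | cons a s ha ih =>
    rw [Finset.prod_cons, Finset.sum_cons]
    simp only [Finset.mem_cons, forall_eq_or_imp] at h0 h1
    have hprod := Finset.prod_le_one h0.2 h1.2
    nlinarith [ih h0.2 h1.2, h0.1, h1.1]

theorem integral_sqrt_prod_mul_prod {ι : Type*} [Fintype ι] {E : ι → Type*}
    [∀ i, MeasureSpace (E i)] [∀ i, SigmaFinite (volume : Measure (E i))]
    {f g : (i : ι) → E i → ℝ} (hf : ∀ i, 0 ≤ f i) (hg : ∀ i, 0 ≤ g i) :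
    ∫ x : (i : ι) → E i, √((∏ i, f i (x i)) * ∏ i, g i (x i)) = ∏ i, ∫ y, √(f i y * g i y) := by
  simp_rw [← Finset.prod_mul_distrib,
    sqrt_prod _ fun i _ => mul_nonneg (hf i _) (hg i _)]
  exact integral_fintype_prod_volume_eq_prod fun i y => √(f i y * g i y)

theorem two_mul_sqrt_mul_div_add_le_one {a b : ℝ} (ha : 0 ≤ a) (hb : 0 ≤ b) :
    2 * √(a * b) / (a + b) ≤ 1 := by
  refine div_le_one_of_le₀ ?_ (add_nonneg ha hb)
  rw [sqrt_mul ha]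
  nlinarith [sq_sqrt ha, sq_sqrt hb, sq_nonneg (√a - √b)]

theorem one_sub_two_mul_sqrt_mul_div_add_le {a b : ℝ} (ha : 0 < a) (hab : a ≤ b) :
    1 - 2 * √(a * b) / (a + b) ≤ (b - a) ^ 2 / (8 * a ^ 2) := by
  have hb : 0 < b := ha.trans_le hab
  have hsa := sq_sqrt ha.le
  have hsb := sq_sqrt hb.le
  have hle : √a ≤ √b := sqrt_le_sqrt hab
  have hsum : 4 * a ≤ (√b + √a) ^ 2 := by nlinarith [sqrt_nonneg a]
  have hdiff : (b - a) ^ 2 = (√b - √a) ^ 2 * (√b + √a) ^ 2 := by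
    rw [← mul_pow]; congr 1; linear_combination hsa - hsb
  rw [sqrt_mul ha.le, one_sub_div (by positivity), div_le_div_iff₀ (by positivity) (by positivity),
    hdiff, show a + b - 2 * (√a * √b) = (√b - √a) ^ 2 by linear_combination -hsa - hsb]
  have h8 : 8 * a ^ 2 ≤ (√b + √a) ^ 2 * (a + b) := by nlinarith
  calc (√b - √a) ^ 2 * (8 * a ^ 2) ≤ (√b - √a) ^ 2 * ((√b + √a) ^ 2 * (a + b)) := by gcongr
    _ = _ := by ring

theorem integral_sqrt_gaussianPDFReal_mul (m : ℝ) {a b : ℝ≥0} (ha : a ≠ 0) (hb : b ≠ 0) :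
    ∫ x, √(gaussianPDFReal m a x * gaussianPDFReal m b x) = √(2 * √(a * b) / (a + b)) := by
  have ha' : (0 : ℝ) < a := by positivity
  have hb' : (0 : ℝ) < b := by positivity
  have hpt : ∀ x, √(gaussianPDFReal m a x * gaussianPDFReal m b x) =
      (√(2 * π * √(a * b)))⁻¹ * rexp (-(1 / (4 * a) + 1 / (4 * b)) * (x - m) ^ 2) := fun x => by
    rw [gaussianPDFReal, gaussianPDFReal, mul_mul_mul_comm, ← mul_inv, ← exp_add,
      sqrt_mul (by positivity), sqrt_inv, ← sqrt_mul (by positivity), ← exp_half,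
      show 2 * π * a * (2 * π * b) = (2 * π) ^ 2 * (a * b) by ring, sqrt_mul (by positivity),
      sqrt_sq (by positivity)]
    field_simp
    ring_nf
  simp_rw [hpt]
  rw [integral_const_mul, integral_sub_right_eq_self
    (fun y => rexp (-(1 / (4 * a) + 1 / (4 * b)) * y ^ 2)) m, integral_gaussian,
    ← sqrt_inv, ← sqrt_mul (by positivity)]
  congr 1
  have hab : √((a : ℝ) * b) ^ 2 = a * b := sq_sqrt (by positivity)
  have : 0 < √((a : ℝ) * b) := by positivity
  field_simp
  linear_combination (-4 * ((a : ℝ) + b)) * hab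

section DiagonalGaussian

variable {ι : Type*} [Fintype ι]

noncomputable def diagonalGaussianPdf (m : ι → ℝ) (v : ι → ℝ≥0) (x : ι → ℝ) : ℝ :=
  ∏ i, gaussianPDFReal (m i) (v i) (x i)

variable (m : ι → ℝ) {v : ι → ℝ≥0}

theorem diagonalGaussianPdf_nonneg (x : ι → ℝ) : 0 ≤ diagonalGaussianPdf m v x :=
  Finset.prod_nonneg fun _ _ => gaussianPDFReal_nonneg _ _ _

theorem measurable_diagonalGaussianPdf : Measurable (diagonalGaussianPdf m v) := by
  unfold diagonalGaussianPdf
  fun_prop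

theorem integrable_diagonalGaussianPdf : Integrable (diagonalGaussianPdf m v) :=
  Integrable.fintype_prod (f := fun i => gaussianPDFReal (m i) (v i))
    fun _ => integrable_gaussianPDFReal _ _

theorem integral_diagonalGaussianPdf (hv : ∀ i, v i ≠ 0) :
    ∫ x, diagonalGaussianPdf m v x = 1 := by
  unfold diagonalGaussianPdf
  rw [integral_fintype_prod_volume_eq_prod
    fun i => gaussianPDFReal (m i) (v i)]
  exact Finset.prod_eq_one fun i _ => integral_gaussianPDFReal_eq_one _ (hv i)

theorem gaussianPdf_diagonal [DecidableEq ι] (hv : ∀ i, v i ≠ 0) :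
    gaussianPdf m (Matrix.diagonal fun i => (v i : ℝ)) = diagonalGaussianPdf m v := by
  have hv' : ∀ i, (v i : ℝ) ≠ 0 := fun i => NNReal.coe_ne_zero.2 (hv i)
  have hinv : (Matrix.diagonal fun i => (v i : ℝ))⁻¹ = Matrix.diagonal fun i => (v i : ℝ)⁻¹ :=
    Matrix.inv_eq_right_inv <| by simp [Matrix.diagonal_mul_diagonal, hv']
  ext x
  simp only [gaussianPdf, diagonalGaussianPdf, gaussianPDFReal, Finset.prod_mul_distrib,
    ← exp_sum, hinv, dotProduct, Matrix.mulVec_diagonal, Pi.sub_apply, Matrix.det_diagonal]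
  congr 1
  · rw [Finset.prod_inv_distrib, ← sqrt_prod _ fun i _ => by positivity,
      Finset.prod_mul_distrib, Finset.prod_const, Finset.card_univ]
  · rw [Finset.mul_sum]
    refine congrArg rexp (Finset.sum_congr rfl fun i _ => ?_)
    field_simp [hv' i]

theorem integral_gaussianMeasure_diagonal [DecidableEq ι] (hv : ∀ i, v i ≠ 0)
    (f : (ι → ℝ) → ℝ) :
    ∫ x, f x ∂gaussianMeasure m (Matrix.diagonal fun i => (v i : ℝ)) =
      ∫ x, diagonalGaussianPdf m v x * f x := by
  rw [gaussianMeasure, gaussianPdf_diagonal m hv, integral_withDensity_eq_integral_toReal_smul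
    (measurable_diagonalGaussianPdf m).ennreal_ofReal (.of_forall fun _ => ENNReal.ofReal_lt_top)]
  simp only [ENNReal.toReal_ofReal (diagonalGaussianPdf_nonneg m _), smul_eq_mul]

theorem integral_abs_sub_diagonalGaussianPdf_le {a b : ι → ℝ≥0} (ha : ∀ i, a i ≠ 0)
    (hab : a ≤ b) :
    ∫ x, |diagonalGaussianPdf m a x - diagonalGaussianPdf m b x| ≤
      2 * min 1 √(∑ i, ((b i : ℝ) - a i) ^ 2 / (8 * (a i : ℝ) ^ 2)) := by
  have hb : ∀ i, b i ≠ 0 := fun i => ((pos_iff_ne_zero.2 (ha i)).trans_le (hab i)).ne'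
  have haff : (∫ x, √(diagonalGaussianPdf m a x * diagonalGaussianPdf m b x)) ^ 2 =
      ∏ i, 2 * √(a i * b i) / (a i + b i) := by
    unfold diagonalGaussianPdf
    rw [integral_sqrt_prod_mul_prod (fun i => gaussianPDFReal_nonneg _ _)
        (fun i => gaussianPDFReal_nonneg _ _), ← Finset.prod_pow]
    refine Finset.prod_congr rfl fun i _ => ?_
    rw [integral_sqrt_gaussianPDFReal_mul _ (ha i) (hb i), sq_sqrt (by positivity)]
  have hlecam := integral_abs_sub_le_two_mul_sqrt_one_sub_sq (diagonalGaussianPdf_nonneg m)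
    (diagonalGaussianPdf_nonneg m) (integrable_diagonalGaussianPdf m)
    (integrable_diagonalGaussianPdf m) (integral_diagonalGaussianPdf m ha)
    (integral_diagonalGaussianPdf m hb)
  refine hlecam.trans (mul_le_mul_of_nonneg_left (le_min ?_ (sqrt_le_sqrt ?_)) zero_le_two)
  · rw [sqrt_le_one]
    nlinarith
  · rw [haff]
    refine (Finset.one_sub_prod_le_sum_one_sub _ (fun i _ => ?_)
      fun i _ => two_mul_sqrt_mul_div_add_le_one (a i).2 (b i).2).trans ?_
    · exact div_nonneg (mul_nonneg zero_le_two (sqrt_nonneg _)) (add_nonneg (a i).2 (b i).2)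
    exact Finset.sum_le_sum fun i _ =>
      one_sub_two_mul_sqrt_mul_div_add_le (NNReal.coe_pos.2 (pos_iff_ne_zero.2 (ha i)))
        (NNReal.coe_le_coe.2 (hab i))

theorem integral_gaussianMeasure_diagonal_sub_le [DecidableEq ι] {a b : ι → ℝ}
    (ha : ∀ i, 0 < a i) (hab : ∀ i, a i ≤ b i) {U : (ι → ℝ) → ℝ} {C : ℝ} (hU : Measurable U)
    (hU0 : ∀ x, 0 ≤ U x) (hUC : ∀ x, U x ≤ C) :
    ∫ x, U x ∂gaussianMeasure m (Matrix.diagonal a) -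
        ∫ x, U x ∂gaussianMeasure m (Matrix.diagonal b) ≤
      C * min 1 √(∑ i, (b i - a i) ^ 2 / (8 * a i ^ 2)) := by
  lift a to ι → ℝ≥0 using fun i => (ha i).le
  lift b to ι → ℝ≥0 using fun i => ((ha i).trans_le (hab i)).le
  have ha' : ∀ i, a i ≠ 0 := fun i => NNReal.coe_ne_zero.1 (ha i).ne'
  have hb' : ∀ i, b i ≠ 0 := fun i => NNReal.coe_ne_zero.1 ((ha i).trans_le (hab i)).ne'
  rw [integral_gaussianMeasure_diagonal m ha', integral_gaussianMeasure_diagonal m hb']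
  calc _ ≤ C / 2 * ∫ x, |diagonalGaussianPdf m a x - diagonalGaussianPdf m b x| :=
        integral_mul_sub_integral_mul_le (integrable_diagonalGaussianPdf m)
          (integrable_diagonalGaussianPdf m)
          (by rw [integral_diagonalGaussianPdf m ha', integral_diagonalGaussianPdf m hb'])
          hU.aestronglyMeasurable hU0 hUC
    _ ≤ C / 2 * (2 * min 1 √(∑ i, ((b i : ℝ) - a i) ^ 2 / (8 * (a i : ℝ) ^ 2))) := by
        have hC : 0 ≤ C := (hU0 0).trans (hUC 0)
        gcongr
        exact integral_abs_sub_diagonalGaussianPdf_le m ha' hab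
    _ = _ := by ring

end DiagonalGaussian

theorem randomization_utility_bound_general
    (n K : ℕ) (hK : 0 < K)
    (μ0 : Fin n → ℝ) (σ : Fin n → ℝ) (hσ : ∀ i, 0 < σ i)
    (σε : ℝ)
    (U : Fin K → (Fin n → ℝ) → ℝ)
    (hU_meas : ∀ k, Measurable (U k))
    (C4 : ℝ) (hC4 : 0 ≤ C4)
    (hU_bdd : ∀ k w, 0 ≤ U k w ∧ U k w ≤ C4) :
    (1 / (K : ℝ)) * ∑ k,
        ((∫ w, U k w ∂(gaussianMeasure μ0 ((K : ℝ)⁻¹ • Matrix.diagonal fun i => σ i ^ 2)))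
          - ∫ w, U k w
              ∂(gaussianMeasure μ0 ((K : ℝ)⁻¹ • Matrix.diagonal fun i => σ i ^ 2 + σε ^ 2)))
      ≤ (3 / 2) * C4 * min 1 (σε ^ 2 * Real.sqrt (∑ i, 1 / σ i ^ 4)) := by
  set s := σε ^ 2 * √(∑ i, 1 / σ i ^ 4) with hs
  have hK' : (0 : ℝ) < K := Nat.cast_pos.2 hK
  have hcov : ∀ w : Fin n → ℝ,
      (K : ℝ)⁻¹ • Matrix.diagonal w = Matrix.diagonal fun i => w i / K := fun w => by
    rw [← Matrix.diagonal_smul]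
    simp only [Pi.smul_def, smul_eq_mul, div_eq_inv_mul]
  have hdist :
      √(∑ i, ((σ i ^ 2 + σε ^ 2) / K - σ i ^ 2 / K) ^ 2 / (8 * (σ i ^ 2 / K) ^ 2)) ≤ s := by
    have hsummand : ∀ i, ((σ i ^ 2 + σε ^ 2) / K - σ i ^ 2 / K) ^ 2 / (8 * (σ i ^ 2 / K) ^ 2) =
        σε ^ 4 / 8 * (1 / σ i ^ 4) := fun i => by
      have := (hσ i).ne'
      field_simp
      ring
    rw [Finset.sum_congr rfl fun i _ => hsummand i, ← Finset.mul_sum, sqrt_mul (by positivity), hs]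
    gcongr
    rw [sqrt_le_iff]
    constructor <;> nlinarith [sq_nonneg σε]
  have hloss : ∀ k,
      ∫ w, U k w ∂(gaussianMeasure μ0 ((K : ℝ)⁻¹ • Matrix.diagonal fun i => σ i ^ 2))
        - ∫ w, U k w ∂(gaussianMeasure μ0 ((K : ℝ)⁻¹ • Matrix.diagonal fun i => σ i ^ 2 + σε ^ 2))
      ≤ C4 * min 1 s := fun k => by
    rw [hcov, hcov]
    refine (integral_gaussianMeasure_diagonal_sub_le μ0 (fun i => by have := hσ i; positivity)
      (fun i => by gcongr; exact le_add_of_nonneg_right (sq_nonneg σε)) (hU_meas k)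
      (fun w => (hU_bdd k w).1) (fun w => (hU_bdd k w).2)).trans ?_
    exact mul_le_mul_of_nonneg_left (min_le_min_left 1 hdist) hC4
  calc _ ≤ (1 / (K : ℝ)) * ∑ _k : Fin K, C4 * min 1 s := by gcongr with k; exact hloss k
    _ = C4 * min 1 s := by simp [hK'.ne']
    _ ≤ 3 / 2 * C4 * min 1 s := by
      have : 0 ≤ min 1 s := le_min zero_le_one (by positivity)
      nlinarith

/-- Utility bound for the Gaussian randomization mechanism: with
`P^O_a = N(μ_0, Σ_0/K)` and `P^S_a = N(μ_0, (Σ_0 + σ_ε²·I_n)/K)`, if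
`0 ≤ U_k(w) ≤ C_4` for all `k` and `w`, then the utility loss satisfies
`ε_u := (1/K)·Σ_k (∫ U_k dP^O_a − ∫ U_k dP^S_a)
  ≤ (3/2)·C_4·min{1, σ_ε²·√(Σ_i 1/σ_i⁴)}`. -/
theorem randomization_utility_bound
    (n K : ℕ) (hK : 0 < K)
    (μ0 : Fin n → ℝ) (σ : Fin n → ℝ) (hσ : ∀ i, 0 < σ i)
    (σε : ℝ) (hσε : 0 < σε)
    (U : Fin K → (Fin n → ℝ) → ℝ)
    (hU_meas : ∀ k, Measurable (U k))
    (C4 : ℝ) (hC4 : 0 ≤ C4)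
    (hU_bdd : ∀ k w, 0 ≤ U k w ∧ U k w ≤ C4) :
    (1 / (K : ℝ)) * ∑ k,
        ((∫ w, U k w ∂(gaussianMeasure μ0 ((K : ℝ)⁻¹ • Matrix.diagonal fun i => σ i ^ 2)))
          - ∫ w, U k w
              ∂(gaussianMeasure μ0 ((K : ℝ)⁻¹ • Matrix.diagonal fun i => σ i ^ 2 + σε ^ 2)))
      ≤ (3 / 2) * C4 * min 1 (σε ^ 2 * Real.sqrt (∑ i, 1 / σ i ^ 4)) :=
  randomization_utility_bound_general n K hK μ0 σ hσ σε U hU_meas C4 hC4 hU_bdd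
end

section
/- A ξ-maximum Bayesian privacy preserving mapping is (2ξ)-differentially private: if e^{−ξ} ≤ f(d|w)/f_B(d) ≤ e^{ξ} for all parameters w and all data d, then for any two parameters w, w' and any d, e^{−2ξ} ≤ f(d|w)/f(d|w') ≤ e^{2ξ}. -/
open Real Set

theorem div_mem_Icc_exp_two_mul {ξ a b : ℝ} (ha : a ∈ Icc (exp (-ξ)) (exp ξ))
    (hb : b ∈ Icc (exp (-ξ)) (exp ξ)) : a / b ∈ Icc (exp (-(2 * ξ))) (exp (2 * ξ)) := by
  have hb_pos : 0 < b := (exp_pos _).trans_le hb.1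
  constructor
  · calc exp (-(2 * ξ)) = exp (-ξ) / exp ξ := by rw [← exp_sub]; ring_nf
      _ ≤ a / b := div_le_div₀ ((exp_pos _).le.trans ha.1) ha.1 hb_pos hb.2
  · calc a / b ≤ exp ξ / exp (-ξ) := div_le_div₀ (exp_pos _).le ha.2 (exp_pos _) hb.1
      _ = exp (2 * ξ) := by rw [← exp_sub]; ring_nf

theorem bayesian_privacy_implies_differential_privacy_general
    {D W : Type*} (f : D → W → ℝ) (fB : D → ℝ)
    (hfB_pos : ∀ d, 0 < fB d)
    (ξ : ℝ)
    (hBP : ∀ d w, Real.exp (-ξ) ≤ f d w / fB d ∧ f d w / fB d ≤ Real.exp ξ) :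
    ∀ d (w w' : W),
      Real.exp (-(2 * ξ)) ≤ f d w / f d w' ∧ f d w / f d w' ≤ Real.exp (2 * ξ) := by
  intro d w w'
  rw [← div_div_div_cancel_right₀ (hfB_pos d).ne' (f d w) (f d w')]
  exact div_mem_Icc_exp_two_mul (hBP d w) (hBP d w')

/-- A ξ-maximum Bayesian privacy preserving mapping is (2ξ)-differentially private:
if `e^{−ξ} ≤ f(d|w)/f_B(d) ≤ e^{ξ}` for all parameters `w` and all data `d`, then for any
two parameters `w, w'` and any `d`, `e^{−2ξ} ≤ f(d|w)/f(d|w') ≤ e^{2ξ}`. -/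
theorem bayesian_privacy_implies_differential_privacy
    {D W : Type*} (f : D → W → ℝ) (fB : D → ℝ)
    (hf_pos : ∀ d w, 0 < f d w) (hfB_pos : ∀ d, 0 < fB d)
    (ξ : ℝ) (hξ : 0 ≤ ξ)
    (hBP : ∀ d w, Real.exp (-ξ) ≤ f d w / fB d ∧ f d w / fB d ≤ Real.exp ξ) :
    ∀ d (w w' : W),
      Real.exp (-(2 * ξ)) ≤ f d w / f d w' ∧ f d w / f d w' ≤ Real.exp (2 * ξ) :=
  bayesian_privacy_implies_differential_privacy_general f fB hfB_pos ξ hBP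
end
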